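/- (Gumbel approximation for geometric maxima with the Nadarajah–Mitov normalising constants) For each integer n ≥ 1, let X_1, …, X_n be i.i.d. geometric random variables with success probability p ∈ (0,1) and failure probability q = 1 − p. Then for all x ∈ ℝ, | P( X_(n) < (log n + x)/(1 − q) ) − exp(−e^{−x}) | ≤ (log n)/(q n) + 1/n + e^{−1} log(1/q) + ((1 − q)/(2q)) · ( (log n)² + e^{−1} ). -/

import Mathlib

/-!
With `m = ⌈(log n + x) / (1 - q)⌉₊` the event is `{∀ i, Xᵢ < m}`, of probability `(1 - qᵐ)ⁿ`.
Write `u = qᵐ` and `n u = e^{-y}`. Bernoulli's inequality gives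
`eⁿᵘ (1 - u)ⁿ ≥ (1 - u²)ⁿ ≥ 1 - n u²`, so `(1 - u)ⁿ` is within `(n u)² e^{-n u} / n ≤ 1 / n` of
`e^{-n u} = Λ(y)`. On `[x, ∞)` the Gumbel density is at most `min (e⁻¹, e^{-x})`, and
`1 - q ≤ log (1/q) ≤ (1/q - q) / 2` yields `0 ≤ y - x ≤ log (1/q) + (log n + x) (1 - q) / (2q)`.
-/

open MeasureTheory ProbabilityTheory Real

lemma sq_mul_exp_neg_le_one {v : ℝ} (hv : 0 ≤ v) : v ^ 2 * exp (-v) ≤ 1 :=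
  calc v ^ 2 * exp (-v) = 4 * (v / 2 * exp (-(v / 2))) ^ 2 := by
        rw [mul_pow, ← exp_nat_mul]; ring_nf
    _ ≤ 4 * exp (-1) ^ 2 := by
        gcongr
        exact mul_exp_neg_le_exp_neg_one _
    _ ≤ 1 := by nlinarith [exp_neg_one_lt_half, exp_pos (-1)]

lemma one_sub_pow_le_exp_neg_mul {u : ℝ} (hu : u ≤ 1) (n : ℕ) :
    (1 - u) ^ n ≤ exp (-(n * u)) := by
  rw [neg_mul_eq_mul_neg, exp_nat_mul]
  exact pow_le_pow_left₀ (by linarith) (one_sub_le_exp_neg u) n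

lemma exp_neg_mul_sub_one_sub_pow_le {u : ℝ} (hu0 : 0 ≤ u) (hu1 : u ≤ 1) (n : ℕ) :
    exp (-(n * u)) - (1 - u) ^ n ≤ n * u ^ 2 * exp (-(n * u)) := by
  have hbernoulli : 1 - n * u ^ 2 ≤ exp (n * u) * (1 - u) ^ n :=
    calc 1 - n * u ^ 2 ≤ (1 + -u ^ 2) ^ n := by
          have := one_add_mul_le_pow (a := -u ^ 2) (by nlinarith) n; linarith
      _ = ((1 + u) * (1 - u)) ^ n := by ring
      _ ≤ (exp u * (1 - u)) ^ n :=
          pow_le_pow_left₀ (by nlinarith)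
            (mul_le_mul_of_nonneg_right (by linarith [add_one_le_exp u]) (by linarith)) n
      _ = exp (n * u) * (1 - u) ^ n := by rw [mul_pow, ← exp_nat_mul]
  have hcancel : exp (-(n * u)) * exp (n * u) = 1 := by rw [← exp_add]; simp
  have := mul_le_mul_of_nonneg_left hbernoulli (exp_pos (-(n * u))).le
  linear_combination this + (1 - u) ^ n * hcancel

lemma abs_one_sub_pow_sub_exp_neg_mul_le {u : ℝ} (hu0 : 0 ≤ u) (hu1 : u ≤ 1) (n : ℕ) :
    |(1 - u) ^ n - exp (-(n * u))| ≤ 1 / n := by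
  rcases n.eq_zero_or_pos with rfl | hn
  · simp
  have hn' : (0 : ℝ) < n := by exact_mod_cast hn
  rw [abs_sub_comm, abs_of_nonneg (sub_nonneg.2 (one_sub_pow_le_exp_neg_mul hu1 n))]
  calc exp (-(n * u)) - (1 - u) ^ n ≤ n * u ^ 2 * exp (-(n * u)) :=
        exp_neg_mul_sub_one_sub_pow_le hu0 hu1 n
    _ = (n * u) ^ 2 * exp (-(n * u)) / n := by field_simp
    _ ≤ 1 / n := by gcongr; exact sq_mul_exp_neg_le_one (by positivity)

lemma hasDerivAt_gumbel (z : ℝ) :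
    HasDerivAt (fun z => exp (-exp (-z))) (exp (-exp (-z)) * exp (-z)) z := by
  simpa using ((hasDerivAt_neg z).exp.neg).exp

lemma monotone_gumbel : Monotone fun x : ℝ => exp (-exp (-x)) := fun x y hxy => by
  simp only; gcongr

lemma gumbel_le_exp (x : ℝ) : exp (-exp (-x)) ≤ exp x := by
  have h := mul_exp_neg_le_exp_neg_one (exp (-x))
  have hx : exp x * exp (-x) = 1 := by rw [← exp_add]; simp
  nlinarith [exp_pos x, exp_pos (-x), exp_pos (-exp (-x)), exp_neg_one_lt_half]

lemma gumbel_sub_le_min_mul {x y : ℝ} (hxy : x ≤ y) :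
    exp (-exp (-y)) - exp (-exp (-x)) ≤ min (exp (-1)) (exp (-x)) * (y - x) := by
  refine (convex_Ici x).image_sub_le_mul_sub_of_deriv_le
    (fun z _ => (hasDerivAt_gumbel z).continuousAt.continuousWithinAt)
    (fun z _ => (hasDerivAt_gumbel z).differentiableAt.differentiableWithinAt)
    (fun z hz => ?_) x (Set.mem_Ici.2 le_rfl) y hxy hxy
  rw [interior_Ici, Set.mem_Ioi] at hz
  rw [(hasDerivAt_gumbel z).deriv]
  refine le_min ?_ ?_
  · rw [mul_comm]; exact mul_exp_neg_le_exp_neg_one _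
  · calc exp (-exp (-z)) * exp (-z) ≤ 1 * exp (-x) := by
          gcongr
          exact exp_le_one_iff.2 (neg_nonpos.2 (exp_pos _).le)
      _ = exp (-x) := one_mul _

lemma exp_neg_one_mul_log_natCast_le_sq (n : ℕ) : exp (-1) * log n ≤ log n ^ 2 := by
  rcases Nat.lt_or_ge n 2 with hn | hn
  · interval_cases n <;> simp
  have hlog : 1 / 2 ≤ log n := by
    calc (1 : ℝ) / 2 ≤ log 2 := by linarith [log_two_gt_d9]
      _ ≤ log n := log_le_log (by norm_num) (by exact_mod_cast hn)
  nlinarith [exp_neg_one_lt_half]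

lemma min_exp_neg_mul_log_natCast_add_le (n : ℕ) (x : ℝ) :
    min (exp (-1)) (exp (-x)) * (log n + x) ≤ log n ^ 2 + exp (-1) := by
  have hlog : min (exp (-1)) (exp (-x)) * log n ≤ log n ^ 2 :=
    (mul_le_mul_of_nonneg_right (min_le_left _ _) (log_natCast_nonneg n)).trans
      (exp_neg_one_mul_log_natCast_le_sq n)
  have hx : min (exp (-1)) (exp (-x)) * x ≤ exp (-1) := by
    rcases le_or_gt 0 x with hx | hx
    · calc min (exp (-1)) (exp (-x)) * x ≤ exp (-x) * x := by gcongr; exact min_le_right _ _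
        _ ≤ exp (-1) := by rw [mul_comm]; exact mul_exp_neg_le_exp_neg_one x
    · nlinarith [le_min (exp_pos (-1)).le (exp_pos (-x)).le, exp_pos (-1)]
  linarith [mul_add (min (exp (-1)) (exp (-x))) (log n) x]

lemma one_sub_le_log_one_div {q : ℝ} (hq : 0 < q) : 1 - q ≤ log (1 / q) := by
  rw [one_div, log_inv]; linarith [log_le_sub_one_of_pos hq]

lemma log_one_div_le {q : ℝ} (hq0 : 0 < q) (hq1 : q ≤ 1) :
    log (1 / q) ≤ 1 - q + (1 - q) ^ 2 / (2 * q) := by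
  have h := self_le_sinh_iff.2 (log_nonneg (one_le_one_div hq0 hq1))
  rw [sinh_log (by positivity)] at h
  convert h using 1
  field_simp
  ring

lemma gumbel_le_one_div_of_log_add_nonpos {n : ℕ} (hn : 0 < n) {x : ℝ} (hx : log n + x ≤ 0) :
    exp (-exp (-x)) ≤ 1 / n :=
  calc exp (-exp (-x)) ≤ exp x := gumbel_le_exp x
    _ ≤ exp (-log n) := exp_le_exp.2 (by linarith)
    _ = 1 / n := by rw [exp_neg, exp_log (by positivity), one_div]

lemma abs_one_sub_pow_ceil_sub_gumbel_le_of_pos {n : ℕ} (hn : 0 < n) {q x : ℝ} (hq0 : 0 < q)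
    (hq1 : q < 1) (hx : 0 < log n + x) :
    |(1 - q ^ ⌈(log n + x) / (1 - q)⌉₊) ^ n - exp (-exp (-x))| ≤
      1 / n + exp (-1) * log (1 / q) + (1 - q) / (2 * q) * (log n ^ 2 + exp (-1)) := by
  set t := (log n + x) / (1 - q)
  set m := ⌈t⌉₊
  set L := log (1 / q)
  have htq : t * (1 - q) = log n + x := div_mul_cancel₀ _ (by linarith)
  have ht : 0 ≤ t := div_nonneg hx.le (by linarith)
  have hL : 1 - q ≤ L := one_sub_le_log_one_div hq0
  have hL' : L ≤ 1 - q + (1 - q) ^ 2 / (2 * q) := log_one_div_le hq0 hq1.le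
  set y := x + (m * L - t * (1 - q))
  have hy : n * q ^ m = exp (-y) := by
    rw [← exp_log (by positivity : (0 : ℝ) < n * q ^ m), log_mul (by positivity) (by positivity),
      log_pow, ← neg_neg (log q), ← log_inv, ← one_div]
    congr 1
    linarith
  have hyx_nonneg : 0 ≤ y - x := by nlinarith [Nat.le_ceil t]
  have hyx_le : y - x ≤ L + (log n + x) * (1 - q) / (2 * q) := by
    have : (log n + x) * (1 - q) / (2 * q) = t * ((1 - q) ^ 2 / (2 * q)) := by
      rw [← htq]; ring
    nlinarith [Nat.ceil_lt_add_one ht]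
  set C := min (exp (-1)) (exp (-x))
  have hpow : |(1 - q ^ m) ^ n - exp (-exp (-y))| ≤ 1 / n := by
    rw [← hy]
    exact abs_one_sub_pow_sub_exp_neg_mul_le (by positivity) (pow_le_one₀ hq0.le hq1.le) n
  have hgumbel : |exp (-exp (-y)) - exp (-exp (-x))| ≤ C * (y - x) := by
    rw [abs_of_nonneg (sub_nonneg.2 (monotone_gumbel (by linarith)))]
    exact gumbel_sub_le_min_mul (by linarith)
  have hC : C * (y - x) ≤ exp (-1) * L + (1 - q) / (2 * q) * (log n ^ 2 + exp (-1)) :=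
    calc C * (y - x) ≤ C * (L + (log n + x) * (1 - q) / (2 * q)) := by gcongr
      _ = C * L + (1 - q) / (2 * q) * (C * (log n + x)) := by ring
      _ ≤ exp (-1) * L + (1 - q) / (2 * q) * (log n ^ 2 + exp (-1)) := by
          gcongr
          · linarith
          · exact min_le_left _ _
          · exact min_exp_neg_mul_log_natCast_add_le n x
  calc _ ≤ |(1 - q ^ m) ^ n - exp (-exp (-y))| + |exp (-exp (-y)) - exp (-exp (-x))| :=
        abs_sub_le _ _ _
    _ ≤ _ := by linarith

lemma abs_one_sub_pow_ceil_sub_gumbel_le {n : ℕ} (hn : 0 < n) {q : ℝ} (hq0 : 0 < q)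
    (hq1 : q < 1) (x : ℝ) :
    |(1 - q ^ ⌈(log n + x) / (1 - q)⌉₊) ^ n - exp (-exp (-x))| ≤
      1 / n + exp (-1) * log (1 / q) + (1 - q) / (2 * q) * (log n ^ 2 + exp (-1)) := by
  rcases le_or_gt (log n + x) 0 with hx | hx
  · rw [Nat.ceil_eq_zero.2 (div_nonpos_of_nonpos_of_nonneg hx (by linarith)), pow_zero, sub_self,
      zero_pow hn.ne', zero_sub, abs_neg, abs_of_pos (exp_pos _)]
    have hL : 0 ≤ exp (-1) * log (1 / q) :=
      mul_nonneg (exp_pos _).le (log_nonneg (one_le_one_div hq0 hq1.le))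
    have hq : 0 ≤ (1 - q) / (2 * q) * (log n ^ 2 + exp (-1)) :=
      mul_nonneg (div_nonneg (by linarith) (by positivity)) (by positivity)
    linarith [gumbel_le_one_div_of_log_add_nonpos hn hx]
  · exact abs_one_sub_pow_ceil_sub_gumbel_le_of_pos hn hq0 hq1 hx

lemma measure_lt_eq_one_sub_pow {Ω : Type*} [MeasurableSpace Ω] {P : Measure Ω} {X : Ω → ℕ}
    (hX : Measurable X) {q : ℝ} (hq0 : 0 ≤ q) (hq1 : q ≤ 1)
    (hgeo : ∀ k, P {ω | X ω = k} = ENNReal.ofReal ((1 - q) * q ^ k)) (m : ℕ) :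
    P {ω | X ω < m} = ENNReal.ofReal (1 - q ^ m) := by
  have hdecomp : {ω | X ω < m} = ⋃ k ∈ Finset.range m, {ω | X ω = k} := by ext; simp
  rw [hdecomp, measure_biUnion_finset (fun a _ b _ hab => ?_)
    (fun k _ => hX (measurableSet_singleton k)) (f := fun k => {ω | X ω = k})]
  · simp_rw [hgeo]
    rw [← ENNReal.ofReal_sum_of_nonneg (fun k _ => by have := pow_nonneg hq0 k; nlinarith),
      ← Finset.mul_sum, mul_neg_geom_sum]
  · exact Set.disjoint_left.2 fun ω h1 h2 => hab (h1.symm.trans h2)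

lemma measure_forall_lt_eq_pow {Ω ι : Type*} [MeasurableSpace Ω] {P : Measure Ω} [Fintype ι]
    {X : ι → Ω → ℕ} (hX : ∀ i, Measurable (X i)) (hindep : iIndepFun X P) {q : ℝ} (hq0 : 0 ≤ q)
    (hq1 : q ≤ 1) (hgeo : ∀ i k, P {ω | X i ω = k} = ENNReal.ofReal ((1 - q) * q ^ k)) (m : ℕ) :
    P {ω | ∀ i, X i ω < m} = ENNReal.ofReal ((1 - q ^ m) ^ Fintype.card ι) := by
  have hevent : {ω | ∀ i, X i ω < m} = ⋂ i ∈ (Finset.univ : Finset ι), X i ⁻¹' Set.Iio m := by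
    ext; simp
  rw [hevent, hindep.measure_inter_preimage_eq_mul _ (fun _ _ => measurableSet_Iio),
    ENNReal.ofReal_pow (sub_nonneg.2 (pow_le_one₀ hq0 hq1)), ← Finset.card_univ,
    ← Finset.prod_const]
  exact Finset.prod_congr rfl fun i _ => measure_lt_eq_one_sub_pow (hX i) hq0 hq1 (hgeo i) m

theorem geometric_max_nadarajah_mitov_general {Ω : Type*} [MeasurableSpace Ω] (P : Measure Ω)
    (n : ℕ) (hn : 1 ≤ n) (p q : ℝ) (hp : 0 < p) (hp1 : p < 1)
    (hq : q = 1 - p) (X : Fin n → Ω → ℕ)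
    (hmeas : ∀ i, Measurable (X i))
    (hgeo : ∀ i k, P {ω | X i ω = k} = ENNReal.ofReal (p * q ^ k))
    (hindep : iIndepFun X P) :
    ∀ x : ℝ,
      |(P {ω | ∀ i, (X i ω : ℝ) < (Real.log n + x) / (1 - q)}).toReal -
          Real.exp (-Real.exp (-x))| ≤
        Real.log n / (q * n) + 1 / n + Real.exp (-1) * Real.log (1 / q) +
          ((1 - q) / (2 * q)) * ((Real.log n) ^ 2 + Real.exp (-1)) := by
  intro x
  obtain rfl : p = 1 - q := by linarith
  have hq0 : 0 < q := by linarith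
  have hq1 : q < 1 := by linarith
  have hevent : {ω | ∀ i, (X i ω : ℝ) < (log n + x) / (1 - q)} =
      {ω | ∀ i, X i ω < ⌈(log n + x) / (1 - q)⌉₊} := by
    simp only [Nat.lt_ceil]
  rw [hevent, measure_forall_lt_eq_pow hmeas hindep hq0.le hq1.le hgeo, Fintype.card_fin,
    ENNReal.toReal_ofReal (pow_nonneg (sub_nonneg.2 (pow_le_one₀ hq0.le hq1.le)) n)]
  have hlog : 0 ≤ log n / (q * n) := div_nonneg (log_natCast_nonneg n) (by positivity)
  linarith [abs_one_sub_pow_ceil_sub_gumbel_le hn hq0 hq1 x]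

/-- **Gumbel approximation for geometric maxima with the Nadarajah–Mitov normalising
constants.** Let `X₁, …, Xₙ` be i.i.d. geometric random variables with success probability
`p ∈ (0,1)` and failure probability `q = 1 − p`.  Then for all `x ∈ ℝ`,
`|P(X₍ₙ₎ < (log n + x)/(1−q)) − exp(−e^{−x})|
  ≤ (log n)/(qn) + 1/n + e^{−1} log(1/q) + ((1−q)/(2q)) ((log n)² + e^{−1})`. -/
theorem geometric_max_nadarajah_mitov {Ω : Type*} [MeasurableSpace Ω] (P : Measure Ω)
    [IsProbabilityMeasure P] (n : ℕ) (hn : 1 ≤ n) (p q : ℝ) (hp : 0 < p) (hp1 : p < 1)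
    (hq : q = 1 - p) (X : Fin n → Ω → ℕ)
    (hmeas : ∀ i, Measurable (X i))
    (hgeo : ∀ i k, P {ω | X i ω = k} = ENNReal.ofReal (p * q ^ k))
    (hindep : iIndepFun X P) :
    ∀ x : ℝ,
      |(P {ω | ∀ i, (X i ω : ℝ) < (Real.log n + x) / (1 - q)}).toReal -
          Real.exp (-Real.exp (-x))| ≤
        Real.log n / (q * n) + 1 / n + Real.exp (-1) * Real.log (1 / q) +
          ((1 - q) / (2 * q)) * ((Real.log n) ^ 2 + Real.exp (-1)) :=
  geometric_max_nadarajah_mitov_general P n hn p q hp hp1 hq X hmeas hgeo hindep
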